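/- The property graph data model subsumes the information capacity of the RDF data model: there exists a computable, semantics-preserving and information-preserving database mapping from RDF databases to property graph databases, namely the schema-independent mapping DM₂ = (SM₂, IM₂); i.e., for every RDF database D = (S^R, G^R), DM₂(D) = (S*, IM₂(G^R)) is a valid property graph database computable from D, and there is a computable inverse mapping recovering G^R from IM₂(G^R) up to isomorphism. -/

import Mathlib

/-! Formalization of RDF databases, Property Graph databases, and the
database mappings DM₁ = (SM₁, IM₁) and DM₂ = (SM₂, IM₂) from
"Mapping RDF Databases to Property Graph Databases". -/

/-- The ambient context: the sets I (IRIs), L (literals), 𝕃 (labels),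
𝕍 (values), 𝕋 (datatypes), the datatype IRIs I_DT, the reserved vocabulary
I_V, the inclusions I ⊆ 𝕃, I ⊆ 𝕍, L ⊆ 𝕍 (with retractions), the
distinguished labels, the datatype `String`, the typing function on values,
and the bijection f : I_DT → 𝕋 with inverse f⁻¹. -/
structure Ctx : Type 1 where
  Iri : Type
  Lit : Type
  Lbl : Type
  Val : Type
  DT : Type
  infIri : Infinite Iri
  infLit : Infinite Lit
  infLbl : Infinite Lbl
  infVal : Infinite Val
  finDT : Finite DT
  IDT : Set Iri
  IV : Set Iri
  iLbl : Iri → Lbl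
  iLbl_inj : Function.Injective iLbl
  lblIri : Lbl → Iri
  lblIri_iLbl : ∀ i, lblIri (iLbl i) = i
  iVal : Iri → Val
  iVal_inj : Function.Injective iVal
  valIri : Val → Iri
  valIri_iVal : ∀ i, valIri (iVal i) = i
  lVal : Lit → Val
  lVal_inj : Function.Injective lVal
  valLit : Val → Lit
  valLit_lVal : ∀ l, valLit (lVal l) = l
  iriLbl : Lbl
  typeLbl : Lbl
  valueLbl : Lbl
  resLbl : Lbl
  litLbl : Lbl
  objLbl : Lbl
  dtpLbl : Lbl
  iri_ne_type : iriLbl ≠ typeLbl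
  iri_ne_value : iriLbl ≠ valueLbl
  type_ne_value : typeLbl ≠ valueLbl
  res_ne_lit : resLbl ≠ litLbl
  obj_ne_dtp : objLbl ≠ dtpLbl
  stringDT : DT
  typeOf : Val → DT
  f : {i : Iri // i ∈ IDT} → DT
  f_bij : Function.Bijective f
  finv : DT → Iri
  finv_mem : ∀ t, finv t ∈ IDT
  f_finv : ∀ t, f ⟨finv t, finv_mem t⟩ = t
  finv_f : ∀ (i : Iri) (h : i ∈ IDT), finv (f ⟨i, h⟩) = i

/-- An RDF graph: resource nodes `NI`, literal nodes `NL` (disjoint from `NI`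
since they are distinct types), object-property edges `EO`, datatype-property
edges `ED` (disjoint), with `aI`/`aL` the IRI/literal assignments, `bO`/`bD`
the incidence functions, and `dI`, `dL`, `dO`, `dD` the components of the
total class-labeling function δ on the disjoint union NI ∪ NL ∪ EO ∪ ED. -/
structure RDFGraph (C : Ctx) : Type 1 where
  NI : Type
  NL : Type
  EO : Type
  ED : Type
  aI : NI → C.Iri
  aL : NL → C.Lit
  bO : EO → NI × NI
  bD : ED → NI × NL
  dI : NI → C.Iri
  dL : NL → C.Iri
  dO : EO → C.Iri
  dD : ED → C.Iri

/-- Well-formedness of an RDF graph: finite node and edge sets and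
injective α_I and α_L (totality and disjointness are built in). -/
def RDFGraph.WF {C : Ctx} (G : RDFGraph C) : Prop :=
  Finite G.NI ∧ Finite G.NL ∧ Finite G.EO ∧ Finite G.ED ∧
    Function.Injective G.aI ∧ Function.Injective G.aL

/-- An RDF graph schema: resource classes `NS`, property classes `ES`,
the class-IRI assignment φ (components `phiN`, `phiE`) and
ϕ(pc) = (dom pc, rng pc). -/
structure RDFSchema (C : Ctx) : Type 1 where
  NS : Type
  ES : Type
  phiN : NS → C.Iri
  phiE : ES → C.Iri
  dom : ES → NS
  rng : ES → NS

/-- Well-formedness of an RDF graph schema: finiteness, injectivity of φ on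
NS ∪ ES, and φ avoiding the reserved vocabulary I_V. -/
def RDFSchema.WF {C : Ctx} (S : RDFSchema C) : Prop :=
  Finite S.NS ∧ Finite S.ES ∧
    Function.Injective (Sum.elim S.phiN S.phiE) ∧
    (∀ x : S.NS ⊕ S.ES, Sum.elim S.phiN S.phiE x ∉ C.IV)

/-- Validity of an RDF graph w.r.t. an RDF graph schema (G^R ⊨ S^R). -/
def RDFValid (C : Ctx) (G : RDFGraph C) (S : RDFSchema C) : Prop :=
  (∀ r : G.NI, ∃ rc : S.NS, G.dI r = S.phiN rc) ∧
  (∀ l : G.NL, ∃ rc : S.NS, G.dL l = S.phiN rc) ∧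
  (∀ e : G.EO, ∃ pc : S.ES, G.dO e = S.phiE pc ∧
      G.dI (G.bO e).1 = S.phiN (S.dom pc) ∧ G.dI (G.bO e).2 = S.phiN (S.rng pc)) ∧
  (∀ e : G.ED, ∃ pc : S.ES, G.dD e = S.phiE pc ∧
      G.dI (G.bD e).1 = S.phiN (S.dom pc) ∧ G.dL (G.bD e).2 = S.phiN (S.rng pc))

/-- A property graph: nodes `N`, edges `E`, properties `P` (mutually disjoint
since distinct types), label function Γ (`lab`), property assignment Υ (`pv`),
incidence Σ (`ends`), and the partial function Δ (`props`), encoded as a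
set-valued function whose domain is `{o | (props o).Nonempty}`. -/
structure PG (C : Ctx) : Type 1 where
  N : Type
  E : Type
  P : Type
  lab : N ⊕ E → C.Lbl
  pv : P → C.Lbl × C.Val
  ends : E → N × N
  props : N ⊕ E → Set P

/-- Well-formedness of a property graph: finite (mutually disjoint) sets of
nodes, edges and properties; Γ, Υ, Σ total (built in); Δ partial into
non-empty sets (built into the encoding) with pairwise disjoint values. -/
def PG.WF {C : Ctx} (G : PG C) : Prop :=
  Finite G.N ∧ Finite G.E ∧ Finite G.P ∧
    ∀ o₁ o₂ : G.N ⊕ G.E, o₁ ≠ o₂ → Disjoint (G.props o₁) (G.props o₂)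

/-- A property graph schema. -/
structure PGSchema (C : Ctx) : Type 1 where
  NT : Type
  ET : Type
  PT : Type
  tlab : NT ⊕ ET → C.Lbl
  tpv : PT → C.Lbl × C.DT
  tends : ET → NT × NT
  tprops : NT ⊕ ET → Set PT

/-- Well-formedness of a property graph schema. -/
def PGSchema.WF {C : Ctx} (S : PGSchema C) : Prop :=
  Finite S.NT ∧ Finite S.ET ∧ Finite S.PT ∧
    ∀ o₁ o₂ : S.NT ⊕ S.ET, o₁ ≠ o₂ → Disjoint (S.tprops o₁) (S.tprops o₂)

/-- Validity of a property graph w.r.t. a property graph schema (G^P ⊨ S^P). -/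
def PGValid (C : Ctx) (G : PG C) (S : PGSchema C) : Prop :=
  (∀ n : G.N, ∃ nt : S.NT,
    G.lab (Sum.inl n) = S.tlab (Sum.inl nt) ∧
    ∀ p ∈ G.props (Sum.inl n), ∃ pt ∈ S.tprops (Sum.inl nt),
      S.tpv pt = ((G.pv p).1, C.typeOf (G.pv p).2)) ∧
  (∀ e : G.E, ∃ (et : S.ET) (nt nt' : S.NT),
    S.tends et = (nt, nt') ∧
    G.lab (Sum.inr e) = S.tlab (Sum.inr et) ∧
    G.lab (Sum.inl (G.ends e).1) = S.tlab (Sum.inl nt) ∧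
    G.lab (Sum.inl (G.ends e).2) = S.tlab (Sum.inl nt') ∧
    ∀ p ∈ G.props (Sum.inr e), ∃ pt ∈ S.tprops (Sum.inr et),
      S.tpv pt = ((G.pv p).1, C.typeOf (G.pv p).2))

/-- The schema mapping SM₁: a node type for each resource class not in I_DT
(each carrying the property type ('iri', String)); for each property class pc
with ϕ(pc) = (rc₁, rc₂): if φ(rc₂) ∈ I_DT, a property type
(φ(pc), f(φ(rc₂))) attached to nt_{rc₁}; otherwise an edge type labeled φ(pc)
from nt_{rc₁} to nt_{rc₂}. -/
def SM1 (C : Ctx) (S : RDFSchema C) : PGSchema C where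
  NT := {rc : S.NS // S.phiN rc ∉ C.IDT}
  ET := {pc : S.ES // S.phiN (S.dom pc) ∉ C.IDT ∧ S.phiN (S.rng pc) ∉ C.IDT}
  PT := {rc : S.NS // S.phiN rc ∉ C.IDT} ⊕
        {pc : S.ES // S.phiN (S.dom pc) ∉ C.IDT ∧ S.phiN (S.rng pc) ∈ C.IDT}
  tlab := Sum.elim (fun nt => C.iLbl (S.phiN nt.1)) (fun et => C.iLbl (S.phiE et.1))
  tpv := Sum.elim (fun _ => (C.iriLbl, C.stringDT))
    (fun pc => (C.iLbl (S.phiE pc.1), C.f ⟨S.phiN (S.rng pc.1), pc.2.2⟩))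
  tends := fun et => (⟨S.dom et.1, et.2.1⟩, ⟨S.rng et.1, et.2.2⟩)
  tprops := Sum.elim
    (fun nt => {pt | match pt with
                     | Sum.inl nt' => nt' = nt
                     | Sum.inr pc => S.dom pc.1 = nt.1})
    (fun _ => ∅)

/-- The instance mapping IM₁: a node n_r (labeled δ(r), carrying the property
('iri', α_I(r))) for each resource node r; a property (δ(dp), α_L(r₂)) on
n_{r₁} for each datatype-property edge dp with β_D(dp) = (r₁, r₂); an edge
(labeled δ(op), from n_{r₁} to n_{r₂}) for each object-property edge op. -/
def IM1 (C : Ctx) (G : RDFGraph C) : PG C where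
  N := G.NI
  E := G.EO
  P := G.NI ⊕ G.ED
  lab := Sum.elim (fun r => C.iLbl (G.dI r)) (fun op => C.iLbl (G.dO op))
  pv := Sum.elim (fun r => (C.iriLbl, C.iVal (G.aI r)))
    (fun dp => (C.iLbl (G.dD dp), C.lVal (G.aL (G.bD dp).2)))
  ends := G.bO
  props := Sum.elim
    (fun n => {p | match p with
                   | Sum.inl r => r = n
                   | Sum.inr dp => (G.bD dp).1 = n})
    (fun _ => ∅)

/-- The inverse schema mapping SM₁⁻¹. -/
def SM1inv (C : Ctx) (T : PGSchema C) : RDFSchema C where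
  NS := {dt : C.DT // ∃ pt : T.PT, (T.tpv pt).1 ≠ C.iriLbl ∧ (T.tpv pt).2 = dt} ⊕ T.NT
  ES := T.ET ⊕ {x : T.NT × T.PT // x.2 ∈ T.tprops (Sum.inl x.1) ∧ (T.tpv x.2).1 ≠ C.iriLbl}
  phiN := Sum.elim (fun dt => C.finv dt.1) (fun nt => C.lblIri (T.tlab (Sum.inl nt)))
  phiE := Sum.elim (fun et => C.lblIri (T.tlab (Sum.inr et)))
    (fun x => C.lblIri (T.tpv x.1.2).1)
  dom := Sum.elim (fun et => Sum.inr (T.tends et).1) (fun x => Sum.inr x.1.1)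
  rng := Sum.elim (fun et => Sum.inr (T.tends et).2)
    (fun x => Sum.inl ⟨(T.tpv x.1.2).2, ⟨x.1.2, x.2.2, rfl⟩⟩)

/-- The (unique, when it exists) value of the property with label `lab`
attached to the object `o`; chosen classically. -/
noncomputable def propVal (C : Ctx) (G : PG C) (o : G.N ⊕ G.E) (lab : C.Lbl) : C.Val :=
  haveI : Nonempty C.Val := @Infinite.nonempty _ C.infVal
  Classical.epsilon (fun v => ∃ p ∈ G.props o, G.pv p = (lab, v))

/-- The inverse instance mapping IM₁⁻¹. -/
noncomputable def IM1inv (C : Ctx) (G : PG C) : RDFGraph C where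
  NI := G.N
  NL := {v : C.Val // ∃ n : G.N, ∃ p ∈ G.props (Sum.inl n),
          (G.pv p).1 ≠ C.iriLbl ∧ (G.pv p).2 = v}
  EO := G.E
  ED := {x : G.N × G.P // x.2 ∈ G.props (Sum.inl x.1) ∧ (G.pv x.2).1 ≠ C.iriLbl}
  aI := fun n => C.valIri (propVal C G (Sum.inl n) C.iriLbl)
  aL := fun v => C.valLit v.1
  bO := G.ends
  bD := fun x => (x.1.1, ⟨(G.pv x.1.2).2, ⟨x.1.1, x.1.2, x.2.1, x.2.2, rfl⟩⟩)
  dI := fun n => C.lblIri (G.lab (Sum.inl n))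
  dL := fun v => C.finv (C.typeOf v.1)
  dO := fun e => C.lblIri (G.lab (Sum.inr e))
  dD := fun x => C.lblIri (G.pv x.1.2).1

/-- The instance mapping IM₂ (schema-independent). -/
def IM2 (C : Ctx) (G : RDFGraph C) : PG C where
  N := G.NI ⊕ G.NL
  E := G.EO ⊕ G.ED
  P := ((G.NI ⊕ G.NL) × Bool) ⊕ (G.EO ⊕ G.ED)
  lab := Sum.elim
    (Sum.elim (fun _ => C.resLbl) (fun _ => C.litLbl))
    (Sum.elim (fun _ => C.objLbl) (fun _ => C.dtpLbl))
  pv := fun p => match p with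
    | Sum.inl (Sum.inl r, false) => (C.iriLbl, C.iVal (G.aI r))
    | Sum.inl (Sum.inl r, true) => (C.typeLbl, C.iVal (G.dI r))
    | Sum.inl (Sum.inr l, false) => (C.valueLbl, C.lVal (G.aL l))
    | Sum.inl (Sum.inr l, true) => (C.typeLbl, C.iVal (G.dL l))
    | Sum.inr (Sum.inl op) => (C.typeLbl, C.iVal (G.dO op))
    | Sum.inr (Sum.inr dp) => (C.typeLbl, C.iVal (G.dD dp))
  ends := Sum.elim
    (fun op => (Sum.inl (G.bO op).1, Sum.inl (G.bO op).2))
    (fun dp => (Sum.inl (G.bD dp).1, Sum.inr (G.bD dp).2))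
  props := Sum.elim
    (fun n => {p | ∃ b, p = Sum.inl (n, b)})
    (fun e => {p | p = Sum.inr e})

/-- The generic property graph schema S*: node types `Resource` (false) and
`Literal` (true); edge types `ObjectProperty` (false) and `DatatypeProperty`
(true); property types 0 = ('iri',String), 1 = ('type',String) on Resource,
2 = ('value',String), 3 = ('type',String) on Literal, 4 = ('type',String) on
ObjectProperty, 5 = ('type',String) on DatatypeProperty. -/
def genericSchema (C : Ctx) : PGSchema C where
  NT := Bool
  ET := Bool
  PT := Fin 6
  tlab := Sum.elim (fun b => cond b C.litLbl C.resLbl)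
    (fun b => cond b C.dtpLbl C.objLbl)
  tpv := fun i =>
    (if i = 0 then C.iriLbl else if i = 2 then C.valueLbl else C.typeLbl, C.stringDT)
  tends := fun b => (false, b)
  tprops := Sum.elim
    (fun b => cond b ({2, 3} : Set (Fin 6)) ({0, 1} : Set (Fin 6)))
    (fun b => cond b ({5} : Set (Fin 6)) ({4} : Set (Fin 6)))

theorem valid_src (C : Ctx) (G : PG C) (hv : PGValid C G (genericSchema C)) (e : G.E) :
    G.lab (Sum.inl (G.ends e).1) = C.resLbl := by
  obtain ⟨et, nt, nt', hends, _, h1, _, _⟩ := hv.2 e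
  have hnt : nt = false := by
    have h := congrArg Prod.fst hends
    simpa [genericSchema] using h.symm
  subst hnt
  simpa [genericSchema] using h1

theorem valid_tgt_obj (C : Ctx) (G : PG C) (hv : PGValid C G (genericSchema C)) (e : G.E)
    (he : G.lab (Sum.inr e) = C.objLbl) :
    G.lab (Sum.inl (G.ends e).2) = C.resLbl := by
  obtain ⟨et, nt, nt', hends, hlabe, _, h2, _⟩ := hv.2 e
  have h : et = nt' := by
    have h := congrArg Prod.snd hends
    simpa [genericSchema] using h
  cases et with
  | true =>
      exfalso
      apply C.obj_ne_dtp
      rw [← he, hlabe]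
      simp [genericSchema]
  | false =>
      rw [← h] at h2
      simpa [genericSchema] using h2

theorem valid_tgt_dtp (C : Ctx) (G : PG C) (hv : PGValid C G (genericSchema C)) (e : G.E)
    (he : G.lab (Sum.inr e) = C.dtpLbl) :
    G.lab (Sum.inl (G.ends e).2) = C.litLbl := by
  obtain ⟨et, nt, nt', hends, hlabe, _, h2, _⟩ := hv.2 e
  have h : et = nt' := by
    have h := congrArg Prod.snd hends
    simpa [genericSchema] using h
  cases et with
  | false =>
      exfalso
      apply C.obj_ne_dtp
      have : G.lab (Sum.inr e) = C.objLbl := by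
        rw [hlabe]; simp [genericSchema]
      rw [← this, he]
  | true =>
      rw [← h] at h2
      simpa [genericSchema] using h2

/-- The inverse instance mapping IM₂⁻¹, defined on property graphs that are
valid with respect to the generic schema S*. -/
noncomputable def IM2inv (C : Ctx) (G : PG C) (hv : PGValid C G (genericSchema C)) :
    RDFGraph C where
  NI := {n : G.N // G.lab (Sum.inl n) = C.resLbl}
  NL := {n : G.N // G.lab (Sum.inl n) = C.litLbl}
  EO := {e : G.E // G.lab (Sum.inr e) = C.objLbl}
  ED := {e : G.E // G.lab (Sum.inr e) = C.dtpLbl}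
  aI := fun n => C.valIri (propVal C G (Sum.inl n.1) C.iriLbl)
  aL := fun n => C.valLit (propVal C G (Sum.inl n.1) C.valueLbl)
  bO := fun e => (⟨(G.ends e.1).1, valid_src C G hv e.1⟩,
                  ⟨(G.ends e.1).2, valid_tgt_obj C G hv e.1 e.2⟩)
  bD := fun e => (⟨(G.ends e.1).1, valid_src C G hv e.1⟩,
                  ⟨(G.ends e.1).2, valid_tgt_dtp C G hv e.1 e.2⟩)
  dI := fun n => C.valIri (propVal C G (Sum.inl n.1) C.typeLbl)
  dL := fun n => C.valIri (propVal C G (Sum.inl n.1) C.typeLbl)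
  dO := fun e => C.valIri (propVal C G (Sum.inr e.1) C.typeLbl)
  dD := fun e => C.valIri (propVal C G (Sum.inr e.1) C.typeLbl)

/-- An isomorphism of RDF graphs: bijections between the corresponding node
and edge sets commuting with α_I, α_L, β_O, β_D and δ. -/
structure RDFIso (C : Ctx) (G₁ G₂ : RDFGraph C) : Type where
  eNI : G₁.NI ≃ G₂.NI
  eNL : G₁.NL ≃ G₂.NL
  eEO : G₁.EO ≃ G₂.EO
  eED : G₁.ED ≃ G₂.ED
  haI : ∀ r, G₂.aI (eNI r) = G₁.aI r
  haL : ∀ l, G₂.aL (eNL l) = G₁.aL l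
  hbO : ∀ e, G₂.bO (eEO e) = (eNI (G₁.bO e).1, eNI (G₁.bO e).2)
  hbD : ∀ e, G₂.bD (eED e) = (eNI (G₁.bD e).1, eNL (G₁.bD e).2)
  hdI : ∀ r, G₂.dI (eNI r) = G₁.dI r
  hdL : ∀ l, G₂.dL (eNL l) = G₁.dL l
  hdO : ∀ e, G₂.dO (eEO e) = G₁.dO e
  hdD : ∀ e, G₂.dD (eED e) = G₁.dD e

/-- An isomorphism of RDF graph schemas: bijections on resource classes and
property classes commuting with φ and ϕ. -/
structure RDFSchemaIso (C : Ctx) (S₁ S₂ : RDFSchema C) : Type where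
  eNS : S₁.NS ≃ S₂.NS
  eES : S₁.ES ≃ S₂.ES
  hphiN : ∀ rc, S₂.phiN (eNS rc) = S₁.phiN rc
  hphiE : ∀ pc, S₂.phiE (eES pc) = S₁.phiE pc
  hdom : ∀ pc, S₂.dom (eES pc) = eNS (S₁.dom pc)
  hrng : ∀ pc, S₂.rng (eES pc) = eNS (S₁.rng pc)

/-- An isomorphism of property graphs: bijections on nodes, edges and
properties commuting with Γ, Υ, Σ and Δ. -/
structure PGIso (C : Ctx) (G₁ G₂ : PG C) : Type where
  eN : G₁.N ≃ G₂.N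
  eE : G₁.E ≃ G₂.E
  eP : G₁.P ≃ G₂.P
  hlab : ∀ o, G₂.lab (Equiv.sumCongr eN eE o) = G₁.lab o
  hpv : ∀ p, G₂.pv (eP p) = G₁.pv p
  hends : ∀ e, G₂.ends (eE e) = (eN (G₁.ends e).1, eN (G₁.ends e).2)
  hprops : ∀ o p, eP p ∈ G₂.props (Equiv.sumCongr eN eE o) ↔ p ∈ G₁.props o

/-- An isomorphism of property graph schemas: bijections on node types, edge
types and property types commuting with Θ, Π, Φ and Ψ. -/
structure PGSchemaIso (C : Ctx) (S₁ S₂ : PGSchema C) : Type where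
  eNT : S₁.NT ≃ S₂.NT
  eET : S₁.ET ≃ S₂.ET
  ePT : S₁.PT ≃ S₂.PT
  htlab : ∀ o, S₂.tlab (Equiv.sumCongr eNT eET o) = S₁.tlab o
  htpv : ∀ pt, S₂.tpv (ePT pt) = S₁.tpv pt
  htends : ∀ et, S₂.tends (eET et) = (eNT (S₁.tends et).1, eNT (S₁.tends et).2)
  htprops : ∀ o pt, ePT pt ∈ S₂.tprops (Equiv.sumCongr eNT eET o) ↔ pt ∈ S₁.tprops o

/-! IM₂ keeps the four kinds of RDF objects apart by their labels and stores α_I,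
α_L and δ as property values. No object of IM₂(G) carries two properties with
the same key, so the classically chosen `propVal` recovers each of them and
`IM2inv` reads G back off. Validity holds because the six shapes of properties
created by IM₂ are exactly the six property types of S*, which gives a typing
homomorphism into S*. -/

def Equiv.subtypeSumElimEqLeft {α β γ : Type*} {a b : γ} (h : b ≠ a) :
    {x : α ⊕ β // Sum.elim (fun _ => a) (fun _ => b) x = a} ≃ α :=
  (Equiv.subtypeEquivRight fun x => by cases x <;> simp [h]).trans Equiv.sumIsLeft

def Equiv.subtypeSumElimEqRight {α β γ : Type*} {a b : γ} (h : a ≠ b) :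
    {x : α ⊕ β // Sum.elim (fun _ => a) (fun _ => b) x = b} ≃ β :=
  (Equiv.subtypeEquivRight fun x => by cases x <;> simp [h]).trans Equiv.sumIsRight

theorem pairwise_disjoint_of_subset_fiber {ι β : Type*} (s : ι → Set β) (f : β → ι)
    (h : ∀ i, s i ⊆ f ⁻¹' {i}) : Pairwise fun i j => Disjoint (s i) (s j) :=
  (pairwise_disjoint_fiber f).mono fun i j hij => hij.mono (h i) (h j)

theorem PGValid.of_typing {C : Ctx} {G : PG C} {S : PGSchema C}
    (τN : G.N → S.NT) (τE : G.E → S.ET) (τP : G.P → S.PT)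
    (hlab : ∀ o, G.lab o = S.tlab (Sum.map τN τE o))
    (hends : ∀ e, S.tends (τE e) = (τN (G.ends e).1, τN (G.ends e).2))
    (hprops : ∀ o, ∀ p ∈ G.props o, τP p ∈ S.tprops (Sum.map τN τE o))
    (hpv : ∀ p, S.tpv (τP p) = ((G.pv p).1, C.typeOf (G.pv p).2)) :
    PGValid C G S :=
  ⟨fun n => ⟨τN n, hlab (.inl n), fun p hp => ⟨τP p, hprops (.inl n) p hp, hpv p⟩⟩,
   fun e => ⟨τE e, _, _, hends e, hlab (.inr e), hlab _, hlab _,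
     fun p hp => ⟨τP p, hprops (.inr e) p hp, hpv p⟩⟩⟩

theorem propVal_eq_of_key_injOn {C : Ctx} {G : PG C} {o : G.N ⊕ G.E} {p : G.P}
    (hkey : Set.InjOn (fun q => (G.pv q).1) (G.props o)) (hp : p ∈ G.props o) :
    propVal C G o (G.pv p).1 = (G.pv p).2 := by
  obtain ⟨q, hq, hqv⟩ : ∃ q ∈ G.props o, G.pv q = ((G.pv p).1, propVal C G o (G.pv p).1) :=
    Classical.epsilon_spec (p := fun v => ∃ q ∈ G.props o, G.pv q = ((G.pv p).1, v))
      ⟨(G.pv p).2, p, hp, rfl⟩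
  have hqp : q = p := hkey hq hp (by simp only [hqv])
  rw [hqp] at hqv
  exact (congrArg Prod.snd hqv).symm

def RDFIso.symm {C : Ctx} {G₁ G₂ : RDFGraph C} (e : RDFIso C G₁ G₂) :
    RDFIso C G₂ G₁ where
  eNI := e.eNI.symm
  eNL := e.eNL.symm
  eEO := e.eEO.symm
  eED := e.eED.symm
  haI r := by obtain ⟨r, rfl⟩ := e.eNI.surjective r; simp [e.haI]
  haL l := by obtain ⟨l, rfl⟩ := e.eNL.surjective l; simp [e.haL]
  hbO x := by obtain ⟨x, rfl⟩ := e.eEO.surjective x; simp [e.hbO]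
  hbD x := by obtain ⟨x, rfl⟩ := e.eED.surjective x; simp [e.hbD]
  hdI r := by obtain ⟨r, rfl⟩ := e.eNI.surjective r; simp [e.hdI]
  hdL l := by obtain ⟨l, rfl⟩ := e.eNL.surjective l; simp [e.hdL]
  hdO x := by obtain ⟨x, rfl⟩ := e.eEO.surjective x; simp [e.hdO]
  hdD x := by obtain ⟨x, rfl⟩ := e.eED.surjective x; simp [e.hdD]

theorem genericSchema_wf (C : Ctx) : (genericSchema C).WF := by
  refine ⟨Finite.of_fintype Bool, Finite.of_fintype Bool, Finite.of_fintype (Fin 6),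
    pairwise_disjoint_of_subset_fiber _ ![.inl false, .inl false, .inl true, .inl true,
      .inr false, .inr true] ?_⟩
  rintro ((_ | _) | (_ | _)) i (rfl | rfl) <;> rfl

namespace IM2

variable {C : Ctx} (G : RDFGraph C)

theorem wf [Finite G.NI] [Finite G.NL] [Finite G.EO] [Finite G.ED] : (IM2 C G).WF :=
  ⟨inferInstanceAs (Finite (G.NI ⊕ G.NL)), inferInstanceAs (Finite (G.EO ⊕ G.ED)),
    inferInstanceAs (Finite (((G.NI ⊕ G.NL) × Bool) ⊕ (G.EO ⊕ G.ED))),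
    pairwise_disjoint_of_subset_fiber _ (Sum.map Prod.fst id) <| by
      rintro (n | e) p hp
      · obtain ⟨b, rfl⟩ := hp
        rfl
      · exact hp ▸ rfl⟩

def propType : (IM2 C G).P → Fin 6
  | .inl (.inl _, false) => 0
  | .inl (.inl _, true) => 1
  | .inl (.inr _, false) => 2
  | .inl (.inr _, true) => 3
  | .inr (.inl _) => 4
  | .inr (.inr _) => 5

theorem valid (hiri_type : ∀ i : C.Iri, C.typeOf (C.iVal i) = C.stringDT)
    (hlit_type : ∀ l : C.Lit, C.typeOf (C.lVal l) = C.stringDT) :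
    PGValid C (IM2 C G) (genericSchema C) := by
  refine PGValid.of_typing Sum.isRight Sum.isRight (propType G) ?_ ?_ ?_ ?_
  · rintro ((_ | _) | (_ | _)) <;> rfl
  · rintro (_ | _) <;> rfl
  · rintro ((_ | _) | (_ | _)) p hp
    · obtain ⟨_ | _, rfl⟩ := hp
      exacts [Or.inl rfl, Or.inr rfl]
    · obtain ⟨_ | _, rfl⟩ := hp
      exacts [Or.inl rfl, Or.inr rfl]
    all_goals exact hp ▸ rfl
  · rintro (⟨_ | _, _ | _⟩ | _ | _) <;>
      simp [propType, genericSchema, IM2, hiri_type, hlit_type]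

theorem key_injOn (o : (IM2 C G).N ⊕ (IM2 C G).E) :
    Set.InjOn (fun p => ((IM2 C G).pv p).1) ((IM2 C G).props o) := by
  rcases o with (_ | _) | _
  · rintro _ ⟨_ | _, rfl⟩ _ ⟨_ | _, rfl⟩ h
    exacts [rfl, absurd h C.iri_ne_type, absurd h.symm C.iri_ne_type, rfl]
  · rintro _ ⟨_ | _, rfl⟩ _ ⟨_ | _, rfl⟩ h
    exacts [rfl, absurd h.symm C.type_ne_value, absurd h C.type_ne_value, rfl]
  · rintro _ rfl _ rfl -
    rfl

theorem propVal_pv (o : (IM2 C G).N ⊕ (IM2 C G).E) (p : (IM2 C G).P)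
    (hp : p ∈ (IM2 C G).props o) :
    propVal C (IM2 C G) o ((IM2 C G).pv p).1 = ((IM2 C G).pv p).2 :=
  propVal_eq_of_key_injOn (key_injOn G o) hp

def isoIM2inv (hv : PGValid C (IM2 C G) (genericSchema C)) :
    RDFIso C G (IM2inv C (IM2 C G) hv) where
  eNI := (Equiv.subtypeSumElimEqLeft C.res_ne_lit.symm).symm
  eNL := (Equiv.subtypeSumElimEqRight C.res_ne_lit).symm
  eEO := (Equiv.subtypeSumElimEqLeft C.obj_ne_dtp.symm).symm
  eED := (Equiv.subtypeSumElimEqRight C.obj_ne_dtp).symm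
  haI r := (congrArg C.valIri
    (propVal_pv G (.inl (.inl r)) (.inl (.inl r, false)) ⟨false, rfl⟩)).trans (C.valIri_iVal _)
  haL l := (congrArg C.valLit
    (propVal_pv G (.inl (.inr l)) (.inl (.inr l, false)) ⟨false, rfl⟩)).trans (C.valLit_lVal _)
  hbO _ := rfl
  hbD _ := rfl
  hdI r := (congrArg C.valIri
    (propVal_pv G (.inl (.inl r)) (.inl (.inl r, true)) ⟨true, rfl⟩)).trans (C.valIri_iVal _)
  hdL l := (congrArg C.valIri
    (propVal_pv G (.inl (.inr l)) (.inl (.inr l, true)) ⟨true, rfl⟩)).trans (C.valIri_iVal _)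
  hdO e := (congrArg C.valIri
    (propVal_pv G (.inr (.inl e)) (.inr (.inl e)) rfl)).trans (C.valIri_iVal _)
  hdD e := (congrArg C.valIri
    (propVal_pv G (.inr (.inr e)) (.inr (.inr e)) rfl)).trans (C.valIri_iVal _)

end IM2

/-- The property graph data model subsumes the information
capacity of the RDF data model: the schema-independent database mapping
DM₂ = (SM₂, IM₂) is computable, semantics preserving and information
preserving: for every RDF database D = (S^R, G^R), DM₂(D) = (S*, IM₂(G^R))
is a valid property graph database computable from D, and there is a
computable inverse mapping recovering G^R from IM₂(G^R) up to isomorphism. -/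
theorem pg_subsumes_rdf_information_capacity (C : Ctx)
    (hiri_type : ∀ i : C.Iri, C.typeOf (C.iVal i) = C.stringDT)
    (hlit_type : ∀ l : C.Lit, C.typeOf (C.lVal l) = C.stringDT) :
    (∃ A : RDFSchema C × RDFGraph C → PGSchema C × PG C,
      ∀ (S : RDFSchema C) (G : RDFGraph C), A (S, G) = (genericSchema C, IM2 C G)) ∧
    (∀ (S : RDFSchema C) (G : RDFGraph C), S.WF → G.WF → RDFValid C G S →
      (IM2 C G).WF ∧ (genericSchema C).WF ∧
        PGValid C (IM2 C G) (genericSchema C)) ∧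
    (∃ AI : (H : PG C) → PGValid C H (genericSchema C) → RDFGraph C,
      ∀ (G : RDFGraph C), G.WF → ∀ hv : PGValid C (IM2 C G) (genericSchema C),
        Nonempty (RDFIso C (AI (IM2 C G) hv) G)) := by
  refine ⟨⟨fun D => (genericSchema C, IM2 C D.2), fun _ _ => rfl⟩, ?_,
    ⟨IM2inv C, fun G _ hv => ⟨(IM2.isoIM2inv G hv).symm⟩⟩⟩
  rintro S G - ⟨_, _, _, _, -, -⟩ -
  exact ⟨IM2.wf G, genericSchema_wf C, IM2.valid G hiri_type hlit_type⟩
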